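/- Assume every entry of A lies in [−1, 1], let μ > 0, set P = m + n and C₀ = 2P² + 3μP + P + μ, fix a reference r ∈ Δ_m × Δ_n and let σ* = (x*, y*) be the unique saddle point of f_r. Let 0 < η < 2μ/C₀² and set C₁ = 2ημ − (ηC₀)² > 0. Consider the reward-transformed RM+ dynamics σ^t_i = θ^t_i/‖θ^t_i‖₁, θ^{t+1}_i = max(θ^t_i + η·m_i(σ^t), 0) with nonnegative nonzero initial blocks θ¹ and assume θ^t_i ≠ 0 for all t. Set C₂ = min_{k ≥ 1} ½‖k·σ* − θ¹‖₂² + η·⟨−m(σ*), θ¹⟩. Then for every T ≥ 1, C₁ · Σ_{t=1}^{T} ½‖σ* − σ^t‖₂² ≤ C₂; in particular the series Σ_{t≥1} ‖σ* − σ^t‖₂² converges. -/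

import Mathlib

open Finset

/-- Squared Euclidean norm of a vector in `ℝ^d`. -/
noncomputable def sqnorm {d : ℕ} (v : Fin d → ℝ) : ℝ := ∑ i, (v i) ^ 2

/-- Euclidean norm `‖·‖₂` of a vector in `ℝ^d`. -/
noncomputable def enorm2 {d : ℕ} (v : Fin d → ℝ) : ℝ := Real.sqrt (sqnorm v)

/-- Euclidean inner product on `ℝ^d`. -/
noncomputable def ip {d : ℕ} (u v : Fin d → ℝ) : ℝ := ∑ i, u i * v i

/-- The max-player's payoff `⟨x, A y⟩` in the two-player zero-sum game with payoff matrix `A`. -/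
noncomputable def pay {m n : ℕ} (A : Matrix (Fin m) (Fin n) ℝ)
    (x : Fin m → ℝ) (y : Fin n → ℝ) : ℝ := ip x (A.mulVec y)

/-- The regularized objective `f_r(x,y) = ⟨x, A y⟩ + (μ/2)‖x − r₀‖₂² − (μ/2)‖y − r₁‖₂²`. -/
noncomputable def freg {m n : ℕ} (A : Matrix (Fin m) (Fin n) ℝ) (μ : ℝ)
    (r₀ : Fin m → ℝ) (r₁ : Fin n → ℝ) (x : Fin m → ℝ) (y : Fin n → ℝ) : ℝ :=
  pay A x y + (μ / 2) * sqnorm (x - r₀) - (μ / 2) * sqnorm (y - r₁)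

/-- `(xs, ys)` is a saddle point of `f_r` on `Δ_m × Δ_n`. -/
def IsSaddle {m n : ℕ} (A : Matrix (Fin m) (Fin n) ℝ) (μ : ℝ)
    (r₀ : Fin m → ℝ) (r₁ : Fin n → ℝ) (xs : Fin m → ℝ) (ys : Fin n → ℝ) : Prop :=
  xs ∈ stdSimplex ℝ (Fin m) ∧ ys ∈ stdSimplex ℝ (Fin n) ∧
  ∀ x ∈ stdSimplex ℝ (Fin m), ∀ y ∈ stdSimplex ℝ (Fin n),
    freg A μ r₀ r₁ xs y ≤ freg A μ r₀ r₁ xs ys ∧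
    freg A μ r₀ r₁ xs ys ≤ freg A μ r₀ r₁ x ys

/-- Regularized loss gradient of the min-player at profile `σ = (x, y)`:
`ℓ₀(σ) = A y + μ(x − r₀)`. -/
noncomputable def ell0 {m n : ℕ} (A : Matrix (Fin m) (Fin n) ℝ) (μ : ℝ)
    (r₀ : Fin m → ℝ) (σ : (Fin m → ℝ) × (Fin n → ℝ)) : Fin m → ℝ :=
  A.mulVec σ.2 + μ • (σ.1 - r₀)

/-- Regularized loss gradient of the max-player at profile `σ = (x, y)`:
`ℓ₁(σ) = −Aᵀ x + μ(y − r₁)`. -/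
noncomputable def ell1 {m n : ℕ} (A : Matrix (Fin m) (Fin n) ℝ) (μ : ℝ)
    (r₁ : Fin n → ℝ) (σ : (Fin m → ℝ) × (Fin n → ℝ)) : Fin n → ℝ :=
  -(A.transpose.mulVec σ.1) + μ • (σ.2 - r₁)

/-- `m₀(σ) = ⟨ℓ₀(σ), x⟩·𝟙 − ℓ₀(σ)`. -/
noncomputable def mvec0 {m n : ℕ} (A : Matrix (Fin m) (Fin n) ℝ) (μ : ℝ)
    (r₀ : Fin m → ℝ) (σ : (Fin m → ℝ) × (Fin n → ℝ)) : Fin m → ℝ :=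
  (ip (ell0 A μ r₀ σ) σ.1) • (1 : Fin m → ℝ) - ell0 A μ r₀ σ

/-- `m₁(σ) = ⟨ℓ₁(σ), y⟩·𝟙 − ℓ₁(σ)`. -/
noncomputable def mvec1 {m n : ℕ} (A : Matrix (Fin m) (Fin n) ℝ) (μ : ℝ)
    (r₁ : Fin n → ℝ) (σ : (Fin m → ℝ) × (Fin n → ℝ)) : Fin n → ℝ :=
  (ip (ell1 A μ r₁ σ) σ.2) • (1 : Fin n → ℝ) - ell1 A μ r₁ σ

/-- The strategy profile obtained by `ℓ₁`-normalizing each block of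
the regret vector `θ`: `σ_i = θ_i / ‖θ_i‖₁`. -/
noncomputable def strat {m n : ℕ} (θ : (Fin m → ℝ) × (Fin n → ℝ)) :
    (Fin m → ℝ) × (Fin n → ℝ) :=
  ((∑ i, |θ.1 i|)⁻¹ • θ.1, (∑ j, |θ.2 j|)⁻¹ • θ.2)

/-- The RM+ Lyapunov potential
`Φ(θ) = min_{k ≥ 1} ½‖k·σ* − θ‖₂² + η⟨−m(σ*), θ⟩` (the minimum is attained, so it equals
the infimum used here). -/
noncomputable def Phi {m n : ℕ} (A : Matrix (Fin m) (Fin n) ℝ) (μ : ℝ)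
    (r₀ : Fin m → ℝ) (r₁ : Fin n → ℝ) (η : ℝ)
    (xs : Fin m → ℝ) (ys : Fin n → ℝ) (θ : (Fin m → ℝ) × (Fin n → ℝ)) : ℝ :=
  sInf {v : ℝ | ∃ k : ℝ, 1 ≤ k ∧
      v = (1 / 2) * (sqnorm (k • xs - θ.1) + sqnorm (k • ys - θ.2))} +
    η * (ip (-(mvec0 A μ r₀ (xs, ys))) θ.1 + ip (-(mvec1 A μ r₁ (xs, ys))) θ.2)

/-!
The RM⁺ update is a step projected onto the nonnegative orthant, which contains the comparator
`k·σ*` for every `k ≥ 1`. Coordinatewise this gives, with `Δ = m(σ^t) − m(σ*)`,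
  `½‖kσ* − θ^{t+1}‖² + η⟨−m(σ*), θ^{t+1}⟩`
  `  ≤ ½‖kσ* − θ^t‖² + η⟨−m(σ*), θ^t⟩ + η⟨m(σ^t), θ^t − kσ*⟩ + (η²/2)‖Δ‖²`.
Since `⟨m(σ^t), θ^t⟩ = 0`, the middle term is `−ηk⟨m(σ^t), σ*⟩`, and the variational inequality of
the saddle point together with the `μ`-strong convexity-concavity of `f_r` gives
`⟨m(σ), σ*⟩ ≥ μ‖σ − σ*‖²`. As `m` is `C₀`-Lipschitz on the simplices, the potential `Φ` drops by
at least `C₁ · ½‖σ* − σ^t‖²` per round; `m(σ*) ≤ 0` coordinatewise makes `Φ ≥ 0`, so the partial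
sums telescope to at most `Φ(θ¹) = C₂`.
-/

open Matrix

section Euclidean

variable {d : ℕ}

lemma ip_eq_dotProduct (u v : Fin d → ℝ) : ip u v = u ⬝ᵥ v := rfl

lemma sqnorm_eq_dotProduct (v : Fin d → ℝ) : sqnorm v = v ⬝ᵥ v := by
  simp only [sqnorm, dotProduct, sq]

lemma sqnorm_nonneg (v : Fin d → ℝ) : 0 ≤ sqnorm v :=
  sum_nonneg fun i _ => sq_nonneg (v i)

lemma sqnorm_sub_comm (u v : Fin d → ℝ) : sqnorm (u - v) = sqnorm (v - u) :=
  sum_congr rfl fun i _ => by simp only [Pi.sub_apply]; ring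

lemma enorm2_eq_norm (v : Fin d → ℝ) : enorm2 v = ‖WithLp.toLp 2 v‖ := by
  simp [enorm2, sqnorm, EuclideanSpace.norm_eq]

lemma ip_eq_inner (u v : Fin d → ℝ) : ip u v = inner ℝ (WithLp.toLp 2 u) (WithLp.toLp 2 v) := by
  simp [ip, PiLp.inner_apply, mul_comm]

lemma enorm2_nonneg (v : Fin d → ℝ) : 0 ≤ enorm2 v := Real.sqrt_nonneg _

lemma sqnorm_eq_enorm2_sq (v : Fin d → ℝ) : sqnorm v = enorm2 v ^ 2 :=
  (Real.sq_sqrt (sqnorm_nonneg v)).symm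

lemma abs_ip_le (u v : Fin d → ℝ) : |ip u v| ≤ enorm2 u * enorm2 v := by
  simpa only [ip_eq_inner, enorm2_eq_norm] using abs_real_inner_le_norm _ _

lemma enorm2_add_le (u v : Fin d → ℝ) : enorm2 (u + v) ≤ enorm2 u + enorm2 v := by
  simpa only [enorm2_eq_norm, WithLp.toLp_add] using norm_add_le _ _

lemma enorm2_sub_le (u v : Fin d → ℝ) : enorm2 (u - v) ≤ enorm2 u + enorm2 v := by
  simpa only [enorm2_eq_norm, WithLp.toLp_sub] using norm_sub_le _ _

lemma enorm2_smul (c : ℝ) (v : Fin d → ℝ) : enorm2 (c • v) = |c| * enorm2 v := by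
  simp only [enorm2_eq_norm, WithLp.toLp_smul, norm_smul, Real.norm_eq_abs]

lemma enorm2_one : enorm2 (1 : Fin d → ℝ) = √d := by
  simp [enorm2, sqnorm]

lemma enorm2_le_one_of_mem_stdSimplex {x : Fin d → ℝ} (hx : x ∈ stdSimplex ℝ (Fin d)) :
    enorm2 x ≤ 1 := by
  refine Real.sqrt_le_one.mpr ?_
  calc sqnorm x = ∑ i, x i ^ 2 := rfl
    _ ≤ ∑ i, x i := sum_le_sum fun i _ => by
        have hxi : x i ≤ 1 := hx.2 ▸ single_le_sum (fun j _ => hx.1 j) (mem_univ i)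
        nlinarith [hx.1 i]
    _ = 1 := hx.2

end Euclidean

lemma sqnorm_mulVec_le {d d' : ℕ} {B : Matrix (Fin d) (Fin d') ℝ} (hB : ∀ i j, |B i j| ≤ 1)
    (w : Fin d' → ℝ) : sqnorm (B *ᵥ w) ≤ d * d' * sqnorm w := by
  have hrow : ∀ i, (B *ᵥ w) i ^ 2 ≤ d' * sqnorm w := fun i => calc
    (B *ᵥ w) i ^ 2 = (∑ j, B i j * w j) ^ 2 := rfl
    _ ≤ (∑ j, B i j ^ 2) * ∑ j, w j ^ 2 := sum_mul_sq_le_sq_mul_sq _ _ _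
    _ ≤ (∑ _j : Fin d', (1 : ℝ)) * ∑ j, w j ^ 2 := by
        gcongr with j
        exact (sq_le_one_iff_abs_le_one _).2 (hB i j)
    _ = d' * sqnorm w := by simp [sqnorm]
  calc sqnorm (B *ᵥ w) = ∑ i, (B *ᵥ w) i ^ 2 := rfl
    _ ≤ ∑ _i : Fin d, d' * sqnorm w := sum_le_sum fun i _ => hrow i
    _ = d * d' * sqnorm w := by simp [mul_assoc]

lemma enorm2_mulVec_le {d d' : ℕ} {B : Matrix (Fin d) (Fin d') ℝ} (hB : ∀ i j, |B i j| ≤ 1)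
    {P : ℝ} (hd : (d : ℝ) ≤ P) (hd' : (d' : ℝ) ≤ P) (w : Fin d' → ℝ) :
    enorm2 (B *ᵥ w) ≤ P * enorm2 w := by
  have hP : 0 ≤ P := (Nat.cast_nonneg d).trans hd
  refine (Real.sqrt_le_left (mul_nonneg hP (enorm2_nonneg w))).2 ?_
  rw [mul_pow, ← sqnorm_eq_enorm2_sq]
  calc sqnorm (B *ᵥ w) ≤ d * d' * sqnorm w := sqnorm_mulVec_le hB w
    _ ≤ P ^ 2 * sqnorm w := by
        rw [sq]; gcongr
        exact sqnorm_nonneg w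

section Regret

variable {d : ℕ}

noncomputable def regretVec (ℓ p : Fin d → ℝ) : Fin d → ℝ := ip ℓ p • (1 : Fin d → ℝ) - ℓ

lemma regretVec_apply (ℓ p : Fin d → ℝ) (a : Fin d) : regretVec ℓ p a = ip ℓ p - ℓ a := by
  simp [regretVec]

lemma ip_regretVec (ℓ p v : Fin d → ℝ) : ip (regretVec ℓ p) v = ip ℓ p * ∑ i, v i - ip ℓ v := by
  simp [regretVec, ip_eq_dotProduct, sub_dotProduct, smul_dotProduct, one_dotProduct]

lemma ip_regretVec_of_sum_eq_one (ℓ p : Fin d → ℝ) {q : Fin d → ℝ} (hq : ∑ i, q i = 1) :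
    ip (regretVec ℓ p) q = ip ℓ (p - q) := by
  rw [ip_regretVec, hq, mul_one]
  simp only [ip_eq_dotProduct, dotProduct_sub]

lemma regretVec_nonpos_of_forall_ip_nonneg {ℓ p : Fin d → ℝ}
    (hvi : ∀ x ∈ stdSimplex ℝ (Fin d), 0 ≤ ip ℓ (x - p)) (a : Fin d) : regretVec ℓ p a ≤ 0 := by
  have h := hvi (Pi.single a 1) (single_mem_stdSimplex ℝ a)
  rw [ip_eq_dotProduct, dotProduct_sub, dotProduct_single, mul_one] at h
  rw [regretVec_apply, ip_eq_dotProduct]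
  linarith

lemma sum_abs_pos {θ : Fin d → ℝ} (hθ0 : θ ≠ 0) : 0 < ∑ i, |θ i| := by
  obtain ⟨a, ha⟩ := Function.ne_iff.1 hθ0
  exact sum_pos' (fun i _ => abs_nonneg (θ i)) ⟨a, mem_univ a, abs_pos.2 ha⟩

lemma inv_sum_abs_smul_mem_stdSimplex {θ : Fin d → ℝ} (hθ : ∀ i, 0 ≤ θ i) (hθ0 : θ ≠ 0) :
    (∑ i, |θ i|)⁻¹ • θ ∈ stdSimplex ℝ (Fin d) := by
  have hpos := sum_abs_pos hθ0
  refine ⟨fun i => mul_nonneg (inv_nonneg.2 hpos.le) (hθ i), ?_⟩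
  simp only [Pi.smul_apply, smul_eq_mul, ← mul_sum]
  rw [sum_congr rfl fun i _ => (abs_of_nonneg (hθ i)).symm]
  exact inv_mul_cancel₀ hpos.ne'

lemma ip_regretVec_inv_sum_abs_smul_self (ℓ : Fin d → ℝ) {θ : Fin d → ℝ} (hθ : ∀ i, 0 ≤ θ i)
    (hθ0 : θ ≠ 0) : ip (regretVec ℓ ((∑ i, |θ i|)⁻¹ • θ)) θ = 0 := by
  set p := (∑ i, |θ i|)⁻¹ • θ
  have hθp : θ = (∑ i, |θ i|) • p := (smul_inv_smul₀ (sum_abs_pos hθ0).ne' θ).symm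
  conv_lhs => rw [hθp]
  rw [ip_eq_dotProduct, dotProduct_smul, ← ip_eq_dotProduct,
    ip_regretVec_of_sum_eq_one ℓ p (inv_sum_abs_smul_mem_stdSimplex hθ hθ0).2, sub_self]
  simp [ip]

end Regret

open Filter Topology in
lemma nonneg_of_forall_nonneg_add_mul {a c : ℝ} (h : ∀ s, 0 < s → s ≤ 1 → 0 ≤ a + s * c) :
    0 ≤ a := by
  have hlim : Tendsto (fun s : ℝ => a + s * c) (𝓝[>] 0) (𝓝 a) := by
    have hcont : Continuous fun s : ℝ => a + s * c := by fun_prop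
    simpa using (hcont.tendsto 0).mono_left nhdsWithin_le_nhds
  refine ge_of_tendsto hlim ?_
  filter_upwards [Ioc_mem_nhdsGT zero_lt_one] with s hs using h s hs.1 hs.2

lemma ip_add_sqnorm_line {d : ℕ} (μ : ℝ) (w r u x : Fin d → ℝ) (s : ℝ) :
    ip w (u + s • (x - u)) + μ / 2 * sqnorm (u + s • (x - u) - r)
      = ip w u + μ / 2 * sqnorm (u - r)
        + s * (ip (w + μ • (u - r)) (x - u) + s * (μ / 2 * sqnorm (x - u))) := by
  simp only [ip, sqnorm, Pi.add_apply, Pi.sub_apply, Pi.smul_apply, smul_eq_mul, mul_sum,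
    ← sum_add_distrib]
  exact sum_congr rfl fun i _ => by ring

lemma ip_grad_nonneg_of_forall_le {d : ℕ} {S : Set (Fin d → ℝ)} (hS : Convex ℝ S) {μ : ℝ}
    {w r u : Fin d → ℝ} (hu : u ∈ S)
    (hmin : ∀ x ∈ S, ip w u + μ / 2 * sqnorm (u - r) ≤ ip w x + μ / 2 * sqnorm (x - r))
    {x : Fin d → ℝ} (hx : x ∈ S) : 0 ≤ ip (w + μ • (u - r)) (x - u) := by
  refine nonneg_of_forall_nonneg_add_mul (c := μ / 2 * sqnorm (x - u)) fun s hs0 hs1 => ?_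
  have h := hmin _ (hS.add_smul_sub_mem hu hx ⟨hs0.le, hs1⟩)
  rw [ip_add_sqnorm_line] at h
  exact nonneg_of_mul_nonneg_right (by linarith) hs0

lemma pay_eq_ip_transpose {m n : ℕ} (A : Matrix (Fin m) (Fin n) ℝ) (x : Fin m → ℝ)
    (y : Fin n → ℝ) : pay A x y = ip (Aᵀ *ᵥ x) y := by
  rw [pay, ip_eq_dotProduct, ip_eq_dotProduct, dotProduct_mulVec, mulVec_transpose]

section Saddle

variable {m n : ℕ} {A : Matrix (Fin m) (Fin n) ℝ} {μ : ℝ} {r₀ : Fin m → ℝ} {r₁ : Fin n → ℝ}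
  {xs : Fin m → ℝ} {ys : Fin n → ℝ}

lemma IsSaddle.ip_ell0_nonneg (hs : IsSaddle A μ r₀ r₁ xs ys) {x : Fin m → ℝ}
    (hx : x ∈ stdSimplex ℝ (Fin m)) : 0 ≤ ip (ell0 A μ r₀ (xs, ys)) (x - xs) := by
  refine ip_grad_nonneg_of_forall_le (convex_stdSimplex ℝ _) hs.1 (fun x hx => ?_) hx
  have h := (hs.2.2 x hx ys hs.2.1).2
  simp only [freg, pay, ip_eq_dotProduct, dotProduct_comm _ (A *ᵥ ys)] at h ⊢
  linarith

lemma IsSaddle.ip_ell1_nonneg (hs : IsSaddle A μ r₀ r₁ xs ys) {y : Fin n → ℝ}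
    (hy : y ∈ stdSimplex ℝ (Fin n)) : 0 ≤ ip (ell1 A μ r₁ (xs, ys)) (y - ys) := by
  refine ip_grad_nonneg_of_forall_le (convex_stdSimplex ℝ _) hs.2.1 (fun y hy => ?_) hy
  have h := (hs.2.2 xs hs.1 y hy).1
  simp only [freg, pay_eq_ip_transpose, ip_eq_dotProduct, neg_dotProduct] at h ⊢
  linarith

lemma IsSaddle.mvec0_nonpos (hs : IsSaddle A μ r₀ r₁ xs ys) (a : Fin m) :
    mvec0 A μ r₀ (xs, ys) a ≤ 0 :=
  regretVec_nonpos_of_forall_ip_nonneg (fun _ hx => hs.ip_ell0_nonneg hx) a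

lemma IsSaddle.mvec1_nonpos (hs : IsSaddle A μ r₀ r₁ xs ys) (b : Fin n) :
    mvec1 A μ r₁ (xs, ys) b ≤ 0 :=
  regretVec_nonpos_of_forall_ip_nonneg (fun _ hy => hs.ip_ell1_nonneg hy) b

/-- Strong monotonicity of the regularized game at its saddle point. -/
lemma IsSaddle.mul_sqnorm_le_ip_mvec (hs : IsSaddle A μ r₀ r₁ xs ys) {x : Fin m → ℝ}
    {y : Fin n → ℝ} (hx : x ∈ stdSimplex ℝ (Fin m)) (hy : y ∈ stdSimplex ℝ (Fin n)) :
    μ * (sqnorm (xs - x) + sqnorm (ys - y))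
      ≤ ip (mvec0 A μ r₀ (x, y)) xs + ip (mvec1 A μ r₁ (x, y)) ys := by
  have h0 : ip (mvec0 A μ r₀ (x, y)) xs = ip (ell0 A μ r₀ (xs, ys)) (x - xs)
      + ip (A *ᵥ (y - ys)) (x - xs) + μ * sqnorm (x - xs) := by
    rw [mvec0, ← regretVec, ip_regretVec_of_sum_eq_one _ _ hs.1.2]
    simp only [ell0, ip_eq_dotProduct, sqnorm_eq_dotProduct, mulVec_sub, add_dotProduct,
      sub_dotProduct, smul_dotProduct, smul_eq_mul]
    ring
  have h1 : ip (mvec1 A μ r₁ (x, y)) ys = ip (ell1 A μ r₁ (xs, ys)) (y - ys)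
      - ip (Aᵀ *ᵥ (x - xs)) (y - ys) + μ * sqnorm (y - ys) := by
    rw [mvec1, ← regretVec, ip_regretVec_of_sum_eq_one _ _ hs.2.1.2]
    simp only [ell1, ip_eq_dotProduct, sqnorm_eq_dotProduct, mulVec_sub, add_dotProduct,
      sub_dotProduct, neg_dotProduct, smul_dotProduct, smul_eq_mul]
    ring
  have hcross : ip (A *ᵥ (y - ys)) (x - xs) = ip (Aᵀ *ᵥ (x - xs)) (y - ys) := by
    rw [← pay_eq_ip_transpose, pay, ip_eq_dotProduct, ip_eq_dotProduct, dotProduct_comm]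
  rw [h0, h1, hcross, sqnorm_sub_comm xs, sqnorm_sub_comm ys]
  linarith [hs.ip_ell0_nonneg hx, hs.ip_ell1_nonneg hy]

end Saddle

lemma enorm2_regretVec_sub_le {d : ℕ} (ℓ ℓ' p p' : Fin d → ℝ) :
    enorm2 (regretVec ℓ p - regretVec ℓ' p')
      ≤ √d * (enorm2 (ℓ - ℓ') * enorm2 p + enorm2 ℓ' * enorm2 (p - p')) + enorm2 (ℓ - ℓ') := by
  have hsplit : regretVec ℓ p - regretVec ℓ' p'
      = (ip (ℓ - ℓ') p + ip ℓ' (p - p')) • (1 : Fin d → ℝ) - (ℓ - ℓ') := by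
    simp only [regretVec, ip_eq_dotProduct, sub_dotProduct, dotProduct_sub]
    module
  have hscalar : |ip (ℓ - ℓ') p + ip ℓ' (p - p')|
      ≤ enorm2 (ℓ - ℓ') * enorm2 p + enorm2 ℓ' * enorm2 (p - p') :=
    (abs_add_le _ _).trans (add_le_add (abs_ip_le _ _) (abs_ip_le _ _))
  rw [hsplit]
  calc _ ≤ enorm2 ((ip (ℓ - ℓ') p + ip ℓ' (p - p')) • (1 : Fin d → ℝ)) + enorm2 (ℓ - ℓ') :=
        enorm2_sub_le _ _
    _ ≤ _ := by
        rw [enorm2_smul, enorm2_one, mul_comm]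
        gcongr

lemma sqrt_natCast_le_natCast (d : ℕ) : √(d : ℝ) ≤ d :=
  (Real.sqrt_le_left (Nat.cast_nonneg d)).2 (by exact_mod_cast Nat.le_self_pow two_ne_zero d)

lemma enorm2_regretVec_affine_sub_le {d d' : ℕ} {B : Matrix (Fin d) (Fin d') ℝ}
    (hB : ∀ i j, |B i j| ≤ 1) {μ P : ℝ} (hμ : 0 ≤ μ) (hd : (d : ℝ) ≤ P) (hd' : (d' : ℝ) ≤ P)
    {r u u' : Fin d → ℝ} {v v' : Fin d' → ℝ} (hr : r ∈ stdSimplex ℝ (Fin d))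
    (hu : u ∈ stdSimplex ℝ (Fin d)) (hu' : u' ∈ stdSimplex ℝ (Fin d))
    (hv' : v' ∈ stdSimplex ℝ (Fin d')) :
    enorm2 (regretVec (B *ᵥ v + μ • (u - r)) u - regretVec (B *ᵥ v' + μ • (u' - r)) u')
      ≤ (P ^ 2 + P) * enorm2 (v - v') + (P ^ 2 + 3 * μ * P + μ) * enorm2 (u - u') := by
  have hP : 0 ≤ P := (Nat.cast_nonneg d).trans hd
  set ℓ := B *ᵥ v + μ • (u - r)
  set ℓ' := B *ᵥ v' + μ • (u' - r)
  have hloss : enorm2 (ℓ - ℓ') ≤ P * enorm2 (v - v') + μ * enorm2 (u - u') := by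
    have h : ℓ - ℓ' = B *ᵥ (v - v') + μ • (u - u') := by
      rw [mulVec_sub]; module
    rw [h]
    refine (enorm2_add_le _ _).trans (add_le_add (enorm2_mulVec_le hB hd hd' _) ?_)
    rw [enorm2_smul, abs_of_nonneg hμ]
  have hloss' : enorm2 ℓ' ≤ P + 2 * μ := by
    refine (enorm2_add_le _ _).trans (add_le_add ?_ ?_)
    · simpa using (enorm2_mulVec_le hB hd hd' v').trans
        (mul_le_mul_of_nonneg_left (enorm2_le_one_of_mem_stdSimplex hv') hP)
    · rw [enorm2_smul, abs_of_nonneg hμ]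
      have := (enorm2_sub_le u' r).trans (add_le_add (enorm2_le_one_of_mem_stdSimplex hu')
        (enorm2_le_one_of_mem_stdSimplex hr))
      nlinarith
  have hsqrt : √(d : ℝ) ≤ P := (sqrt_natCast_le_natCast d).trans hd
  have hu1 := enorm2_le_one_of_mem_stdSimplex hu
  have := enorm2_nonneg u
  have := enorm2_nonneg ℓ'
  have := enorm2_nonneg (ℓ - ℓ')
  have := enorm2_nonneg (u - u')
  have := enorm2_nonneg (v - v')
  calc _ ≤ √d * (enorm2 (ℓ - ℓ') * enorm2 u + enorm2 ℓ' * enorm2 (u - u')) + enorm2 (ℓ - ℓ') :=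
        enorm2_regretVec_sub_le _ _ _ _
    _ ≤ P * ((P * enorm2 (v - v') + μ * enorm2 (u - u')) * 1 + (P + 2 * μ) * enorm2 (u - u'))
          + (P * enorm2 (v - v') + μ * enorm2 (u - u')) := by gcongr
    _ = _ := by ring

lemma add_mul_sq_add_add_mul_sq_le {a b s t : ℝ} (hab : 0 ≤ a * b) :
    (a * s + b * t) ^ 2 + (a * t + b * s) ^ 2 ≤ (a + b) ^ 2 * (s ^ 2 + t ^ 2) := by
  nlinarith [mul_nonneg hab (sq_nonneg (s - t))]

lemma mvec0_eq_regretVec {m n : ℕ} (A : Matrix (Fin m) (Fin n) ℝ) (μ : ℝ) (r₀ : Fin m → ℝ)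
    (σ : (Fin m → ℝ) × (Fin n → ℝ)) :
    mvec0 A μ r₀ σ = regretVec (A *ᵥ σ.2 + μ • (σ.1 - r₀)) σ.1 := rfl

lemma mvec1_eq_regretVec {m n : ℕ} (A : Matrix (Fin m) (Fin n) ℝ) (μ : ℝ) (r₁ : Fin n → ℝ)
    (σ : (Fin m → ℝ) × (Fin n → ℝ)) :
    mvec1 A μ r₁ σ = regretVec ((-Aᵀ) *ᵥ σ.1 + μ • (σ.2 - r₁)) σ.2 := by
  rw [mvec1, ell1, neg_mulVec, regretVec]

lemma sqnorm_mvec_sub_le {m n : ℕ} {A : Matrix (Fin m) (Fin n) ℝ} (hA : ∀ i j, |A i j| ≤ 1)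
    {μ : ℝ} (hμ : 0 ≤ μ) {r₀ x xs : Fin m → ℝ} {r₁ y ys : Fin n → ℝ}
    (hr₀ : r₀ ∈ stdSimplex ℝ (Fin m)) (hr₁ : r₁ ∈ stdSimplex ℝ (Fin n))
    (hx : x ∈ stdSimplex ℝ (Fin m)) (hy : y ∈ stdSimplex ℝ (Fin n))
    (hxs : xs ∈ stdSimplex ℝ (Fin m)) (hys : ys ∈ stdSimplex ℝ (Fin n)) :
    sqnorm (mvec0 A μ r₀ (x, y) - mvec0 A μ r₀ (xs, ys))
        + sqnorm (mvec1 A μ r₁ (x, y) - mvec1 A μ r₁ (xs, ys))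
      ≤ (2 * ((m : ℝ) + n) ^ 2 + 3 * μ * ((m : ℝ) + n) + ((m : ℝ) + n) + μ) ^ 2
        * (sqnorm (x - xs) + sqnorm (y - ys)) := by
  set P : ℝ := (m : ℝ) + n
  have hmP : (m : ℝ) ≤ P := le_add_of_nonneg_right (Nat.cast_nonneg n)
  have hnP : (n : ℝ) ≤ P := le_add_of_nonneg_left (Nat.cast_nonneg m)
  have hP : 0 ≤ P := by positivity
  have hAT : ∀ j i, |(-Aᵀ) j i| ≤ 1 := fun j i => by simpa using hA i j
  have h0 := enorm2_regretVec_affine_sub_le (v := y) hA hμ hmP hnP hr₀ hx hxs hys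
  have h1 := enorm2_regretVec_affine_sub_le (v := x) hAT hμ hnP hmP hr₁ hy hys hxs
  rw [mvec0_eq_regretVec, mvec0_eq_regretVec, mvec1_eq_regretVec, mvec1_eq_regretVec]
  simp only [sqnorm_eq_enorm2_sq]
  calc _ ≤ ((P ^ 2 + P) * enorm2 (y - ys) + (P ^ 2 + 3 * μ * P + μ) * enorm2 (x - xs)) ^ 2
        + ((P ^ 2 + P) * enorm2 (x - xs) + (P ^ 2 + 3 * μ * P + μ) * enorm2 (y - ys)) ^ 2 := by
        gcongr <;> exact enorm2_nonneg _
    _ ≤ ((P ^ 2 + P) + (P ^ 2 + 3 * μ * P + μ)) ^ 2 * (enorm2 (y - ys) ^ 2 + enorm2 (x - xs) ^ 2) :=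
        add_mul_sq_add_add_mul_sq_le (by positivity)
    _ = _ := by ring

noncomputable def rmPlusStep {m n : ℕ} (A : Matrix (Fin m) (Fin n) ℝ) (μ : ℝ)
    (r₀ : Fin m → ℝ) (r₁ : Fin n → ℝ) (η : ℝ) (θ : (Fin m → ℝ) × (Fin n → ℝ)) :
    (Fin m → ℝ) × (Fin n → ℝ) :=
  (fun a => max (θ.1 a + η * mvec0 A μ r₀ (strat θ) a) 0,
   fun b => max (θ.2 b + η * mvec1 A μ r₁ (strat θ) b) 0)

lemma half_sq_sub_max_le {z p g c : ℝ} (hz : 0 ≤ z) :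
    1 / 2 * (z - max (p + g) 0) ^ 2 + c * max (p + g) 0
      ≤ 1 / 2 * (z - p) ^ 2 + c * p + g * (p - z) + 1 / 2 * (g + c) ^ 2 := by
  rcases le_or_gt 0 (p + g) with h | h
  · rw [max_eq_left h]; nlinarith [sq_nonneg c]
  · rw [max_eq_right h.le]
    nlinarith [mul_nonneg hz (neg_nonneg.2 h.le), sq_nonneg (c + g + p)]

lemma half_sqnorm_sub_max_le {d : ℕ} (η : ℝ) {z : Fin d → ℝ} (hz : ∀ i, 0 ≤ z i)
    (θ g c : Fin d → ℝ) :
    1 / 2 * sqnorm (z - fun i => max (θ i + η * g i) 0)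
        + η * ip (-c) (fun i => max (θ i + η * g i) 0)
      ≤ 1 / 2 * sqnorm (z - θ) + η * ip (-c) θ + η * ip g (θ - z)
        + η ^ 2 / 2 * sqnorm (g - c) := by
  simp only [sqnorm, ip, Pi.sub_apply, Pi.neg_apply, mul_sum, ← sum_add_distrib]
  refine sum_le_sum fun i _ => ?_
  linear_combination half_sq_sub_max_le (p := θ i) (g := η * g i) (c := -(η * c i)) (hz i)

lemma sInf_add_le_sInf_add {f g : ℝ → ℝ} {a b : ℝ} (hf : ∀ k, 0 ≤ f k)
    (h : ∀ k, 1 ≤ k → f k + a ≤ g k + b) :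
    sInf {v | ∃ k : ℝ, 1 ≤ k ∧ v = f k} + a ≤ sInf {v | ∃ k : ℝ, 1 ≤ k ∧ v = g k} + b := by
  rw [← sub_le_iff_le_add]
  refine le_csInf ?_ ?_
  · exact ⟨g 1, 1, le_rfl, rfl⟩
  rintro _ ⟨k, hk, rfl⟩
  have hinf : sInf {v | ∃ k : ℝ, 1 ≤ k ∧ v = f k} ≤ f k :=
    csInf_le ⟨0, fun _ ⟨k, _, hv⟩ => hv ▸ hf k⟩ ⟨k, hk, rfl⟩
  linarith [h k hk]

section Potential

variable {m n : ℕ} {A : Matrix (Fin m) (Fin n) ℝ} {μ : ℝ} {r₀ : Fin m → ℝ} {r₁ : Fin n → ℝ}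
  {xs : Fin m → ℝ} {ys : Fin n → ℝ} {η : ℝ}

lemma Phi_nonneg (hs : IsSaddle A μ r₀ r₁ xs ys) (hη : 0 ≤ η) {θ : (Fin m → ℝ) × (Fin n → ℝ)}
    (hθ : (∀ a, 0 ≤ θ.1 a) ∧ (∀ b, 0 ≤ θ.2 b)) : 0 ≤ Phi A μ r₀ r₁ η xs ys θ := by
  refine add_nonneg (Real.sInf_nonneg ?_) (mul_nonneg hη (add_nonneg ?_ ?_))
  · rintro _ ⟨k, -, rfl⟩
    have := sqnorm_nonneg (k • xs - θ.1)
    have := sqnorm_nonneg (k • ys - θ.2)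
    positivity
  · exact sum_nonneg fun a _ => mul_nonneg (neg_nonneg.2 (hs.mvec0_nonpos a)) (hθ.1 a)
  · exact sum_nonneg fun b _ => mul_nonneg (neg_nonneg.2 (hs.mvec1_nonpos b)) (hθ.2 b)

lemma Phi_rmPlusStep_add_le (hs : IsSaddle A μ r₀ r₁ xs ys) (hμ : 0 ≤ μ) (hη : 0 ≤ η) {L : ℝ}
    (hLip : ∀ x ∈ stdSimplex ℝ (Fin m), ∀ y ∈ stdSimplex ℝ (Fin n),
      sqnorm (mvec0 A μ r₀ (x, y) - mvec0 A μ r₀ (xs, ys))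
          + sqnorm (mvec1 A μ r₁ (x, y) - mvec1 A μ r₁ (xs, ys))
        ≤ L ^ 2 * (sqnorm (x - xs) + sqnorm (y - ys)))
    {θ : (Fin m → ℝ) × (Fin n → ℝ)} (hθ : (∀ a, 0 ≤ θ.1 a) ∧ (∀ b, 0 ≤ θ.2 b))
    (hθ0 : θ.1 ≠ 0 ∧ θ.2 ≠ 0) :
    Phi A μ r₀ r₁ η xs ys (rmPlusStep A μ r₀ r₁ η θ)
        + (2 * η * μ - (η * L) ^ 2)
          * (1 / 2 * (sqnorm (xs - (strat θ).1) + sqnorm (ys - (strat θ).2)))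
      ≤ Phi A μ r₀ r₁ η xs ys θ := by
  set σ := strat θ
  set D := sqnorm (xs - σ.1) + sqnorm (ys - σ.2)
  have hx : σ.1 ∈ stdSimplex ℝ (Fin m) := inv_sum_abs_smul_mem_stdSimplex hθ.1 hθ0.1
  have hy : σ.2 ∈ stdSimplex ℝ (Fin n) := inv_sum_abs_smul_mem_stdSimplex hθ.2 hθ0.2
  set M := ip (mvec0 A μ r₀ σ) xs + ip (mvec1 A μ r₁ σ) ys
  have hmono : μ * D ≤ M := hs.mul_sqnorm_le_ip_mvec hx hy
  have hlip := hLip σ.1 hx σ.2 hy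
  rw [sqnorm_sub_comm σ.1, sqnorm_sub_comm σ.2] at hlip
  have horth0 : ip (mvec0 A μ r₀ σ) θ.1 = 0 :=
    ip_regretVec_inv_sum_abs_smul_self _ hθ.1 hθ0.1
  have horth1 : ip (mvec1 A μ r₁ σ) θ.2 = 0 :=
    ip_regretVec_inv_sum_abs_smul_self _ hθ.2 hθ0.2
  unfold Phi
  rw [add_assoc]
  refine sInf_add_le_sInf_add (fun k => ?_) fun k hk => ?_
  · have := sqnorm_nonneg (k • xs - (rmPlusStep A μ r₀ r₁ η θ).1)
    have := sqnorm_nonneg (k • ys - (rmPlusStep A μ r₀ r₁ η θ).2)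
    positivity
  have hk0 : 0 ≤ k := zero_le_one.trans hk
  have h0 := half_sqnorm_sub_max_le η (z := k • xs) (fun a => mul_nonneg hk0 (hs.1.1 a))
    θ.1 (mvec0 A μ r₀ σ) (mvec0 A μ r₀ (xs, ys))
  have h1 := half_sqnorm_sub_max_le η (z := k • ys) (fun b => mul_nonneg hk0 (hs.2.1.1 b))
    θ.2 (mvec1 A μ r₁ σ) (mvec1 A μ r₁ (xs, ys))
  have hregret : ip (mvec0 A μ r₀ σ) (θ.1 - k • xs) + ip (mvec1 A μ r₁ σ) (θ.2 - k • ys)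
      = -(k * M) := by
    simp only [M, ip_eq_dotProduct, dotProduct_sub, dotProduct_smul, smul_eq_mul]
      at horth0 horth1 ⊢
    rw [horth0, horth1]; ring
  have hM : 0 ≤ M :=
    le_trans (mul_nonneg hμ (add_nonneg (sqnorm_nonneg _) (sqnorm_nonneg _))) hmono
  have hkM : η * (μ * D) ≤ η * (k * M) :=
    mul_le_mul_of_nonneg_left (hmono.trans (le_mul_of_one_le_left hM hk)) hη
  have hlipη := mul_le_mul_of_nonneg_left hlip (by positivity : 0 ≤ η ^ 2 / 2)
  simp only [rmPlusStep]
  linear_combination h0 + h1 + η * hregret + hkM + hlipη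

end Potential

lemma sum_range_le_of_add_le {Φ c : ℕ → ℝ} (hΦ : ∀ t, 0 ≤ Φ t) (h : ∀ t, Φ (t + 1) + c t ≤ Φ t)
    (T : ℕ) : ∑ t ∈ range T, c t ≤ Φ 0 := by
  have htel : Φ T + ∑ t ∈ range T, c t ≤ Φ 0 := by
    induction T with
    | zero => simp
    | succ T ih => rw [sum_range_succ]; linarith [h T]
  linarith [hΦ T]

theorem rtrmplus_summable_distance_to_saddle_general
    (m n : ℕ) (A : Matrix (Fin m) (Fin n) ℝ)
    (hA : ∀ i j, A i j ∈ Set.Icc (-1 : ℝ) 1)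
    (μ : ℝ) (hμ : 0 < μ)
    (P C₀ : ℝ) (hP : P = ((m : ℝ) + (n : ℝ)))
    (hC₀ : C₀ = 2 * P ^ 2 + 3 * μ * P + P + μ)
    (r₀ : Fin m → ℝ) (r₁ : Fin n → ℝ)
    (hr₀ : r₀ ∈ stdSimplex ℝ (Fin m)) (hr₁ : r₁ ∈ stdSimplex ℝ (Fin n))
    (xs : Fin m → ℝ) (ys : Fin n → ℝ) (hsaddle : IsSaddle A μ r₀ r₁ xs ys)
    (η : ℝ) (hη : 0 < η)
    (C₁ : ℝ) (hC₁ : C₁ = 2 * η * μ - (η * C₀) ^ 2) (hC₁pos : 0 < C₁)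
    (θ : ℕ → (Fin m → ℝ) × (Fin n → ℝ))
    (hinit_nonneg : (∀ a, 0 ≤ (θ 0).1 a) ∧ (∀ b, 0 ≤ (θ 0).2 b))
    (hrec : ∀ t, θ (t + 1) =
      (fun a => max ((θ t).1 a + η * mvec0 A μ r₀ (strat (θ t)) a) 0,
       fun b => max ((θ t).2 b + η * mvec1 A μ r₁ (strat (θ t)) b) 0))
    (hnz : ∀ t, (θ t).1 ≠ 0 ∧ (θ t).2 ≠ 0)
    (C₂ : ℝ) (hC₂ : C₂ = Phi A μ r₀ r₁ η xs ys (θ 0)) :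
    (∀ T : ℕ,
      C₁ * ∑ t ∈ Finset.range T,
        (1 / 2) * (sqnorm (xs - (strat (θ t)).1) + sqnorm (ys - (strat (θ t)).2)) ≤ C₂) ∧
    Summable (fun t =>
      sqnorm (xs - (strat (θ t)).1) + sqnorm (ys - (strat (θ t)).2)) := by
  subst hP hC₀
  have hθ : ∀ t, (∀ a, 0 ≤ (θ t).1 a) ∧ (∀ b, 0 ≤ (θ t).2 b) := by
    intro t
    induction t with
    | zero => exact hinit_nonneg
    | succ t _ => rw [hrec t]; exact ⟨fun a => le_max_right _ _, fun b => le_max_right _ _⟩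
  have hstep (t : ℕ) : Phi A μ r₀ r₁ η xs ys (θ (t + 1))
      + C₁ * (1 / 2 * (sqnorm (xs - (strat (θ t)).1) + sqnorm (ys - (strat (θ t)).2)))
      ≤ Phi A μ r₀ r₁ η xs ys (θ t) := by
    rw [hrec t, hC₁]
    refine Phi_rmPlusStep_add_le hsaddle hμ.le hη.le (fun x hx y hy => ?_) (hθ t) (hnz t)
    exact sqnorm_mvec_sub_le (fun i j => abs_le.2 (hA i j)) hμ.le hr₀ hr₁ hx hy
      hsaddle.1 hsaddle.2.1
  have hbound (T : ℕ) : C₁ * ∑ t ∈ range T,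
      1 / 2 * (sqnorm (xs - (strat (θ t)).1) + sqnorm (ys - (strat (θ t)).2)) ≤ C₂ := by
    rw [hC₂, mul_sum]
    exact sum_range_le_of_add_le (fun t => Phi_nonneg hsaddle hη.le (hθ t)) hstep T
  refine ⟨hbound, summable_of_sum_range_le (c := 2 * C₂ / C₁)
    (fun t => add_nonneg (sqnorm_nonneg _) (sqnorm_nonneg _)) fun T => ?_⟩
  rw [le_div_iff₀ hC₁pos]
  have := hbound T
  rw [← mul_sum] at this
  linarith

/-- along the reward-transformed RM+ dynamics with step size
`0 < η < 2μ/C₀²` and `C₁ = 2ημ − (ηC₀)² > 0`, the partial sums satisfy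
`C₁ Σ_{t=1}^T ½‖σ* − σ^t‖₂² ≤ C₂` for every `T ≥ 1`, where
`C₂ = min_{k ≥ 1} ½‖k·σ* − θ¹‖₂² + η⟨−m(σ*), θ¹⟩`; in particular
`Σ_{t ≥ 1} ‖σ* − σ^t‖₂²` converges. -/
theorem rtrmplus_summable_distance_to_saddle
    (m n : ℕ) (hm : 1 ≤ m) (hn : 1 ≤ n) (A : Matrix (Fin m) (Fin n) ℝ)
    (hA : ∀ i j, A i j ∈ Set.Icc (-1 : ℝ) 1)
    (μ : ℝ) (hμ : 0 < μ)
    (P C₀ : ℝ) (hP : P = ((m : ℝ) + (n : ℝ)))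
    (hC₀ : C₀ = 2 * P ^ 2 + 3 * μ * P + P + μ)
    (r₀ : Fin m → ℝ) (r₁ : Fin n → ℝ)
    (hr₀ : r₀ ∈ stdSimplex ℝ (Fin m)) (hr₁ : r₁ ∈ stdSimplex ℝ (Fin n))
    (xs : Fin m → ℝ) (ys : Fin n → ℝ) (hsaddle : IsSaddle A μ r₀ r₁ xs ys)
    (η : ℝ) (hη : 0 < η) (hηlt : η < 2 * μ / C₀ ^ 2)
    (C₁ : ℝ) (hC₁ : C₁ = 2 * η * μ - (η * C₀) ^ 2) (hC₁pos : 0 < C₁)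
    (θ : ℕ → (Fin m → ℝ) × (Fin n → ℝ))
    (hinit_nonneg : (∀ a, 0 ≤ (θ 0).1 a) ∧ (∀ b, 0 ≤ (θ 0).2 b))
    (hinit_ne : (θ 0).1 ≠ 0 ∧ (θ 0).2 ≠ 0)
    (hrec : ∀ t, θ (t + 1) =
      (fun a => max ((θ t).1 a + η * mvec0 A μ r₀ (strat (θ t)) a) 0,
       fun b => max ((θ t).2 b + η * mvec1 A μ r₁ (strat (θ t)) b) 0))
    (hnz : ∀ t, (θ t).1 ≠ 0 ∧ (θ t).2 ≠ 0)
    (C₂ : ℝ) (hC₂ : C₂ = Phi A μ r₀ r₁ η xs ys (θ 0)) :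
    (∀ T : ℕ,
      C₁ * ∑ t ∈ Finset.range T,
        (1 / 2) * (sqnorm (xs - (strat (θ t)).1) + sqnorm (ys - (strat (θ t)).2)) ≤ C₂) ∧
    Summable (fun t =>
      sqnorm (xs - (strat (θ t)).1) + sqnorm (ys - (strat (θ t)).2)) :=
  rtrmplus_summable_distance_to_saddle_general m n A hA μ hμ P C₀ hP hC₀ r₀ r₁ hr₀ hr₁ xs ys hsaddle
    η hη C₁ hC₁ hC₁pos θ hinit_nonneg hrec hnz C₂ hC₂
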